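/- Let μ ≥ 5 and regard S_+ (the 3-spherical object supported on vertices 1,…,4, with ℂ at each of these vertices, all α's acting as the identity and all β's as zero) as an object of D = D^b mod(ℂQ/I); equivalently, S_+ is isomorphic in D to the complex P(4) →^{β_3} P(3) →^{α_2} P(2) →^{β_1} P(1) with P(1) in degree zero. Then RHom_D(P(j), S_+) ≅ ℂ ⊕ ℂ[3] for every j = 5,…,μ. -/

import Mathlib

namespace CHS

open CategoryTheory Limits Pretriangulated

universe v u

variable {D : Type u} [Category.{v} D]

section Defs

variable [Preadditive D] [HasZeroObject D] [HasShift D ℤ]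
  [∀ n : ℤ, (shiftFunctor D n).Additive] [Pretriangulated D] [Linear ℂ D]

/-- `homsAre X Y c` says that for each `p : ℤ` the Hom space `Hom(X, Y⟦p⟧)` is isomorphic to
`ℂ^{c p}`.  Since an object `V` of `D^b(mod ℂ)` is determined up to isomorphism by the dimensions
of its cohomologies, and `H^p(RHom(X, Y)) = Hom(X, Y[p])`, this is a faithful rendering of
`RHom(X, Y) ≅ ⊕_p ℂ^{c p}[-p]` in `D^b(mod ℂ)`. -/
def homsAre (X Y : D) (c : ℤ → ℕ) : Prop :=
  ∀ p : ℤ, Nonempty ((X ⟶ Y⟦p⟧) ≃ₗ[ℂ] (Fin (c p) → ℂ))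

/-- `E` is an exceptional object: `RHom(E, E) ≅ ℂ·id`. -/
def IsExceptionalObj (X : D) : Prop :=
  homsAre X X fun p => if p = 0 then 1 else 0

/-- Membership in the smallest strictly full triangulated subcategory of `D`
containing the set `S`. -/
inductive inTriaClosure (S : Set D) : D → Prop
  | of {X : D} (hX : X ∈ S) : inTriaClosure S X
  | zero {X : D} (hX : IsZero X) : inTriaClosure S X
  | iso {X Y : D} (e : X ≅ Y) (hX : inTriaClosure S X) : inTriaClosure S Y
  | shift {X : D} (n : ℤ) (hX : inTriaClosure S X) : inTriaClosure S (X⟦n⟧)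
  | ext {T : Triangle D} (hT : T ∈ distinguishedTriangles (C := D))
      (h₁ : inTriaClosure S T.obj₁) (h₃ : inTriaClosure S T.obj₃) : inTriaClosure S T.obj₂

/-- `(E 0, …, E (n-1))` is an exceptional collection. -/
def IsExceptionalCollection {n : ℕ} (E : Fin n → D) : Prop :=
  (∀ i, IsExceptionalObj (E i)) ∧
    ∀ i j : Fin n, j < i → ∀ (p : ℤ) (f : E i ⟶ (E j)⟦p⟧), f = 0

/-- The collection generates `D` as a triangulated category. -/
def IsFullCollection {n : ℕ} (E : Fin n → D) : Prop :=
  ∀ X : D, inTriaClosure (Set.range E) X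

/-- Full exceptional collection. -/
def IsFEC {n : ℕ} (E : Fin n → D) : Prop :=
  IsExceptionalCollection E ∧ IsFullCollection E

/-- A collection is strong if `Hom(E_i, E_j[p]) = 0` for all `i, j` and all `p ≠ 0`. -/
def IsStrongCollection {n : ℕ} (E : Fin n → D) : Prop :=
  ∀ i j : Fin n, ∀ p : ℤ, p ≠ 0 → ∀ f : E i ⟶ (E j)⟦p⟧, f = 0

/-- composite of the chain of morphisms `P (j+k) ⟶ P (j+k-1) ⟶ ⋯ ⟶ P j`. -/
def pathComp (P : ℕ → D) (f : ∀ i : ℕ, P (i + 1) ⟶ P i) (j : ℕ) : ∀ k : ℕ, (P (j + k) ⟶ P j)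
  | 0 => 𝟙 _
  | k + 1 => f (j + k) ≫ pathComp P f j k

/-- A presentation of the triangulated category `D = D^b(mod ℂQ/I)` for the quiver `Q` with
vertices `1, …, μ`, double arrows `α_i, β_i : i → i+1` and relations
`α_i β_{i+1} = β_i α_{i+1} = 0`:  `P i` is the indecomposable projective at the vertex `i`
(for `1 ≤ i ≤ μ`), `a i` (resp. `b i`) is the morphism `P (i+1) ⟶ P i` given by right
multiplication with the arrow `α_i` (resp. `β_i`); `(P μ, …, P 1)` is a full strong exceptional
collection, `Hom(P i, P j)` has as a basis the (two, for `j < i`) nonzero paths from `j` to `i`,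
namely the pure `α`-path and the pure `β`-path, and the mixed composites vanish. -/
structure Setup (μ : ℕ) (D : Type u) [Category.{v} D] [Preadditive D] [HasZeroObject D]
    [HasShift D ℤ] [∀ n : ℤ, (shiftFunctor D n).Additive] [Pretriangulated D] [Linear ℂ D] where
  P : ℕ → D
  a : ∀ i : ℕ, P (i + 1) ⟶ P i
  b : ∀ i : ℕ, P (i + 1) ⟶ P i
  rel_ab : ∀ i : ℕ, a (i + 1) ≫ b i = 0
  rel_ba : ∀ i : ℕ, b (i + 1) ≫ a i = 0
  hom_dims : ∀ i j : ℕ, 1 ≤ i → i ≤ μ → 1 ≤ j → j ≤ μ →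
      homsAre (P i) (P j)
        (fun p => if p = 0 then (if i = j then 1 else if j < i then 2 else 0) else 0)
  hom_basis : ∀ j k : ℕ, 1 ≤ j → 1 ≤ k → j + k ≤ μ →
      ∃ B : Module.Basis (Fin 2) ℂ (P (j + k) ⟶ P j),
        B 0 = pathComp P a j k ∧ B 1 = pathComp P b j k
  full : ∀ X : D, inTriaClosure {Y : D | ∃ i : ℕ, 1 ≤ i ∧ i ≤ μ ∧ Y = P i} X

/-- A Serre functor on `D`: an autoequivalence `S` together with perfect pairings
`Hom(X, Y) ⊗ Hom(Y, S X) → ℂ`, `(f, g) ↦ tr (f ≫ g)`, realizing the bifunctorial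
isomorphisms `Hom(X, Y) ≅ Hom(Y, S X)^*`. -/
structure SerreData (D : Type u) [Category.{v} D] [Preadditive D] [Linear ℂ D] where
  S : D ⥤ D
  isEquivalence : S.IsEquivalence
  trace : ∀ X : D, (X ⟶ S.obj X) →ₗ[ℂ] ℂ
  comm : ∀ {X Y : D} (h : Y ⟶ X) (u : X ⟶ S.obj Y),
      trace Y (h ≫ u) = trace X (u ≫ S.map h)
  nondeg : ∀ {X Y : D} (f : X ⟶ Y), f ≠ 0 → ∃ g : Y ⟶ S.obj X, trace X (f ≫ g) ≠ 0
  perfect : ∀ {X Y : D} (φ : (Y ⟶ S.obj X) →ₗ[ℂ] ℂ), ∃ f : X ⟶ Y, ∀ g, φ g = trace X (f ≫ g)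

/-- Data exhibiting `S` as (an object isomorphic to) the totalization of the four-term
complex `W → X → Y → Z` (with `Z` in degree `0`) of objects of `D`;
`K₁ = [W → X]`, `K₂ = [W → X → Y]` are the intermediate (iterated) cones. -/
structure TotData (W X Y Z S : D) (f : W ⟶ X) (g : X ⟶ Y) (h : Y ⟶ Z) where
  K₁ : D
  ι₁ : X ⟶ K₁
  δ₁ : K₁ ⟶ W⟦(1 : ℤ)⟧
  tri₁ : Triangle.mk f ι₁ δ₁ ∈ distinguishedTriangles (C := D)
  v₁ : K₁ ⟶ Y
  fac₁ : ι₁ ≫ v₁ = g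
  K₂ : D
  ι₂ : Y ⟶ K₂
  δ₂ : K₂ ⟶ K₁⟦(1 : ℤ)⟧
  tri₂ : Triangle.mk v₁ ι₂ δ₂ ∈ distinguishedTriangles (C := D)
  v₂ : K₂ ⟶ Z
  fac₂ : ι₂ ≫ v₂ = h
  ι₃ : Z ⟶ S
  δ₃ : S ⟶ K₂⟦(1 : ℤ)⟧
  tri₃ : Triangle.mk v₂ ι₃ δ₃ ∈ distinguishedTriangles (C := D)

end Defs

/-- `n`-th power of an (auto)equivalence. -/
def eqPowNat (T : D ≌ D) : ℕ → (D ≌ D)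
  | 0 => CategoryTheory.Equivalence.refl
  | n + 1 => (eqPowNat T n).trans T

/-- `k`-th power (`k : ℤ`) of an autoequivalence. -/
def eqPow (T : D ≌ D) : ℤ → (D ≌ D)
  | Int.ofNat n => eqPowNat T n
  | Int.negSucc n => (eqPowNat T (n + 1)).symm

section Twist

variable [Preadditive D] [HasZeroObject D] [HasShift D ℤ]
  [∀ n : ℤ, (shiftFunctor D n).Additive] [Pretriangulated D] [Linear ℂ D]
  [HasFiniteBiproducts D] [∀ X Y : D, FiniteDimensional ℂ (X ⟶ Y)]

/-- The object `⊕_{|p| ≤ N} Hom(S, X[p]) ⊗ S[-p]`, i.e. `RHom(S,X) ⊗ S` when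
`Hom(S, X[p]) = 0` for `|p| > N`. -/
noncomputable def sTensor (S X : D) (N : ℕ) : D :=
  biproduct (fun pq : Σ p : (Finset.Icc (-(N : ℤ)) (N : ℤ)),
      Fin (Module.finrank ℂ (S ⟶ X⟦(p.1 : ℤ)⟧)) => S⟦(-(pq.1.1 : ℤ))⟧)

/-- The canonical evaluation morphism `RHom(S,X) ⊗ S ⟶ X` (each basis vector
`f : S ⟶ X⟦p⟧` of `Hom(S, X⟦p⟧)` evaluates via `f⟦-p⟧` composed with `X⟦p⟧⟦-p⟧ ≅ X`). -/
noncomputable def sTensorEv (S X : D) (N : ℕ) : sTensor S X N ⟶ X :=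
  biproduct.desc fun pq =>
    ((Module.finBasis ℂ (S ⟶ X⟦(pq.1.1 : ℤ)⟧) pq.2)⟦(-(pq.1.1 : ℤ))⟧') ≫
      (shiftFunctorCompIsoId D (pq.1.1 : ℤ) (-(pq.1.1 : ℤ)) (by ring)).hom.app X

/-- `Hom(S, X[p]) = 0` for `|p| > N`. -/
def homBound (S X : D) (N : ℕ) : Prop :=
  ∀ p : ℤ, ((p < -(N : ℤ)) ∨ ((N : ℤ) < p)) → ∀ f : S ⟶ X⟦p⟧, f = 0

/-- `L` is the left mutation `L_A B`, i.e. there is a distinguished triangle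
`L → RHom(A, B) ⊗ A → B → L[1]` whose middle map is the canonical evaluation. -/
def IsLeftMutation (A B L : D) : Prop :=
  ∃ (N : ℕ) (u : L ⟶ sTensor A B N) (w : B ⟶ L⟦(1 : ℤ)⟧),
    homBound A B N ∧ Triangle.mk u (sTensorEv A B N) w ∈ distinguishedTriangles (C := D)

/-- `T` is the spherical twist along `S`: it is an autoequivalence and for every `X` there
is a distinguished triangle `RHom(S, X) ⊗ S → X → T X → (RHom(S, X) ⊗ S)[1]` whose first
map is the canonical evaluation. -/
structure IsSphericalTwist (S : D) (T : D ⥤ D) : Prop where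
  isEquivalence : T.IsEquivalence
  twistTriangle : ∀ X : D, ∃ (N : ℕ) (g : X ⟶ T.obj X) (w : T.obj X ⟶ (sTensor S X N)⟦(1 : ℤ)⟧),
    homBound S X N ∧ Triangle.mk (sTensorEv S X N) g w ∈ distinguishedTriangles (C := D)

/-- Elementary moves on (isomorphism classes of) collections of `n` objects of `D`:
the braid group generators act by mutations, `ℤ^n` acts by objectwise translations, and
isomorphic collections are identified.  The orbit equivalence relation of the
`B_n ⋉ ℤ^n`-action on isomorphism classes of collections is `Relation.EqvGen (Move n)`. -/
inductive Move (n : ℕ) : (Fin n → D) → (Fin n → D) → Prop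
  | braid (E : Fin n → D) (i : ℕ) (h : i + 1 < n) (L : D)
      (hL : IsLeftMutation (E ⟨i, by omega⟩) (E ⟨i + 1, h⟩) L) :
      Move n E (fun j => if (j : ℕ) = i then L else if (j : ℕ) = i + 1 then E ⟨i, by omega⟩ else E j)
  | shift (E : Fin n → D) (m : Fin n → ℤ) : Move n E (fun j => (E j)⟦m j⟧)
  | iso (E E' : Fin n → D) (h : ∀ j, Nonempty (E j ≅ E' j)) : Move n E E'

end Twist

end CHS

namespace CHS

open CategoryTheory Limits Pretriangulated

universe v u

variable {D : Type u} [Category.{v} D] [Preadditive D] [HasZeroObject D] [HasShift D ℤ]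
  [∀ n : ℤ, (shiftFunctor D n).Additive] [Pretriangulated D] [Linear ℂ D]

section Aux

open CategoryTheory Limits Pretriangulated

variable {D : Type u} [Category.{v} D] [Preadditive D] [HasZeroObject D] [HasShift D ℤ]
  [∀ n : ℤ, (shiftFunctor D n).Additive] [Pretriangulated D] [Linear ℂ D]

set_option linter.unusedSectionVars false in
lemma aux_shift_ex₂ {T : Triangle D} (hT : T ∈ distinguishedTriangles (C := D)) (p : ℤ) {X : D}
    (f : X ⟶ T.obj₂⟦p⟧) (hf : f ≫ T.mor₂⟦p⟧' = 0) :
    ∃ g : X ⟶ T.obj₁⟦p⟧, f = g ≫ T.mor₁⟦p⟧' := by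
  obtain ⟨g, hg⟩ : ∃ g : X ⟶ T.obj₁⟦p⟧,
      f = g ≫ ((p.negOnePow : ℤˣ) • (T.mor₁⟦p⟧' : T.obj₁⟦p⟧ ⟶ T.obj₂⟦p⟧)) :=
    Triangle.coyoneda_exact₂ _ (Triangle.shift_distinguished T hT p)
    (X := X) f (by
      dsimp
      show f ≫ (p.negOnePow • T.mor₂⟦p⟧') = 0
      rw [Linear.comp_units_smul, hf, smul_zero])
  refine ⟨p.negOnePow • g, ?_⟩
  rw [hg]
  rw [Linear.comp_units_smul, Linear.units_smul_comp]

set_option linter.unusedSectionVars false in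
lemma aux_map_eqToHom (P : ℕ → D) (f : ∀ i : ℕ, P (i + 1) ⟶ P i) {x y : ℕ} (h : x = y) :
    f x ≫ eqToHom (congrArg P h) = eqToHom (congrArg P (congrArg Nat.succ h)) ≫ f y := by
  subst h; simp

set_option linter.unusedSectionVars false in
lemma aux_pathComp_mixed (P : ℕ → D) (f g : ∀ i : ℕ, P (i + 1) ⟶ P i)
    (rel : ∀ i, f (i + 1) ≫ g i = 0) (i : ℕ) : ∀ k : ℕ, pathComp P f (i+1) (k+1) ≫ g i = 0
  | 0 => by simpa [pathComp] using rel i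
  | (k+1) => by
      show (f ((i+1)+(k+1)) ≫ pathComp P f (i+1) (k+1)) ≫ g i = 0
      rw [Category.assoc, aux_pathComp_mixed P f g rel i k, comp_zero]

set_option linter.unusedSectionVars false in
lemma aux_pathComp_down (P : ℕ → D) (f : ∀ i : ℕ, P (i + 1) ⟶ P i) (i : ℕ) :
    ∀ k : ℕ, pathComp P f i (k+1)
      = eqToHom (congrArg P (by omega : i + (k+1) = (i+1) + k)) ≫ pathComp P f (i+1) k ≫ f i
  | 0 => by simp [pathComp]
  | (k+1) => by
      show f (i+(k+1)) ≫ pathComp P f i (k+1) = _ ≫ (f ((i+1)+k) ≫ pathComp P f (i+1) k) ≫ f i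
      rw [aux_pathComp_down P f i k, ← Category.assoc (f (i+(k+1))),
        aux_map_eqToHom P f (show i+(k+1) = (i+1)+k by omega)]
      simp

lemma aux_zeroEquiv {M : Type*} [AddCommGroup M] [Module ℂ M] (h : ∀ m : M, m = 0) :
    Nonempty (M ≃ₗ[ℂ] (Fin 0 → ℂ)) :=
  ⟨LinearEquiv.ofLinear 0 0 (LinearMap.ext fun x => Subsingleton.elim _ _)
    (LinearMap.ext fun m => by rw [h m]; simp)⟩

lemma aux_expand2 {M : Type*} [AddCommGroup M] [Module ℂ M] (B : Module.Basis (Fin 2) ℂ M) (m : M) :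
    m = B.repr m 0 • B 0 + B.repr m 1 • B 1 := by
  have := B.sum_repr m
  rw [Fin.sum_univ_two] at this
  exact this.symm

lemma aux_equivOne {M N : Type*} [AddCommGroup M] [Module ℂ M] [AddCommGroup N] [Module ℂ N]
    (φ : M →ₗ[ℂ] N) (χ : M →ₗ[ℂ] ℂ) (hφ : Function.Surjective φ)
    (hχ : Function.Surjective χ) (h : ∀ m, φ m = 0 ↔ χ m = 0) :
    Nonempty (N ≃ₗ[ℂ] (Fin 1 → ℂ)) := by
  have hker : LinearMap.ker φ = LinearMap.ker χ := by
    ext m; simpa using h m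
  exact ⟨((φ.quotKerEquivOfSurjective hφ).symm.trans
    ((Submodule.quotEquivOfEq _ _ hker).trans (χ.quotKerEquivOfSurjective hχ))).trans
    (LinearEquiv.funUnique (Fin 1) ℂ ℂ).symm⟩

lemma aux_kerEquivOne {W M N : Type*} [AddCommGroup W] [Module ℂ W] [AddCommGroup M] [Module ℂ M]
    [AddCommGroup N] [Module ℂ N] (Φ : W →ₗ[ℂ] M) (ψ : M →ₗ[ℂ] N) (B : Module.Basis (Fin 2) ℂ M)
    (hΦ : Function.Injective Φ) (hψΦ : ∀ w, ψ (Φ w) = 0)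
    (hlift : ∀ m, ψ m = 0 → ∃ w, Φ w = m) (h0 : ψ (B 0) = 0) (h1 : ψ (B 1) ≠ 0) :
    Nonempty (W ≃ₗ[ℂ] (Fin 1 → ℂ)) := by
  set χ : W →ₗ[ℂ] ℂ := (B.coord 0).comp Φ with hχdef
  have hbij : Function.Bijective χ := by
    constructor
    · intro w w' hww'
      have hz : χ (w - w') = 0 := by rw [map_sub, hww', sub_self]
      have hm : ψ (Φ (w - w')) = 0 := hψΦ _
      have hrepr1 : B.repr (Φ (w - w')) 1 = 0 := by
        have hex := aux_expand2 B (Φ (w - w'))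
        rw [hex, map_add, map_smul, map_smul, h0, smul_zero, zero_add] at hm
        exact (smul_eq_zero.mp hm).resolve_right h1
      have hrepr0 : B.repr (Φ (w - w')) 0 = 0 := hz
      have hz2 : Φ (w - w') = 0 := by
        rw [aux_expand2 B (Φ (w - w')), hrepr0, hrepr1, zero_smul, zero_smul, add_zero]
      have := hΦ (by rw [hz2, map_zero] : Φ (w - w') = Φ 0)
      exact sub_eq_zero.mp this
    · intro c
      obtain ⟨w, hw⟩ := hlift (c • B 0) (by rw [map_smul, h0, smul_zero])
      exact ⟨w, by simp [hχdef, hw, Module.Basis.coord_apply]⟩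
  exact ⟨(LinearEquiv.ofBijective χ hbij).trans (LinearEquiv.funUnique (Fin 1) ℂ ℂ).symm⟩

set_option linter.unusedSectionVars false in
lemma aux_van_shift {X Y : D} (q r : ℤ) (h : 1 + q = r) (hv : ∀ g : X ⟶ Y⟦r⟧, g = 0)
    (f : X ⟶ (Y⟦(1:ℤ)⟧)⟦q⟧) : f = 0 := by
  have hh : f = (f ≫ (shiftFunctorAdd' D 1 q r h).inv.app Y)
      ≫ (shiftFunctorAdd' D 1 q r h).hom.app Y := by simp
  rw [hh, hv (f ≫ (shiftFunctorAdd' D 1 q r h).inv.app Y), zero_comp]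

set_option linter.unusedSectionVars false in
/-- linear equivalence on Hom spaces given by precomposition with mutually inverse maps -/
def aux_preL {X X' : D} (Y : D) (e : X' ⟶ X) (e' : X ⟶ X') (h1 : e ≫ e' = 𝟙 X')
    (h2 : e' ≫ e = 𝟙 X) : (X ⟶ Y) ≃ₗ[ℂ] (X' ⟶ Y) :=
  LinearEquiv.ofLinear (Linear.leftComp ℂ Y e) (Linear.leftComp ℂ Y e')
    (by ext f; simp [← Category.assoc, h1]) (by ext f; simp [← Category.assoc, h2])

end Aux

set_option maxHeartbeats 1000000 in
/-- Let `μ ≥ 5` and regard `S₊` as an object of `D = D^b mod(ℂQ/I)`: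
it is the totalization of the complex `P(4) →^{β₃} P(3) →^{α₂} P(2) →^{β₁} P(1)` with
`P(1)` in degree zero.  Then `RHom(P(j), S₊) ≅ ℂ ⊕ ℂ[3]` for every `j = 5, …, μ`. -/
theorem statement15 (μ : ℕ) (hμ : 5 ≤ μ) (St : Setup μ D) (Sp : D)
    (TDp : TotData (St.P 4) (St.P 3) (St.P 2) (St.P 1) Sp (St.b 3) (St.a 2) (St.b 1)) :
    ∀ j : ℕ, 5 ≤ j → j ≤ μ →
      homsAre (St.P j) Sp (fun p => if p = 0 ∨ p = -3 then 1 else 0) := by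
  intro j hj5 hjμ
  obtain ⟨s, hs⟩ : ∃ s : ℕ, j = 5 + s := ⟨j - 5, by omega⟩
  have h4 : 4 + (s+1) = j := by omega
  have h3 : 3 + (s+2) = j := by omega
  have h2 : 2 + (s+3) = j := by omega
  have h1 : 1 + (s+4) = j := by omega
  obtain ⟨B4, hB40, hB41⟩ := St.hom_basis 4 (s+1) (by omega) (by omega) (by omega)
  obtain ⟨B3, hB30, hB31⟩ := St.hom_basis 3 (s+2) (by omega) (by omega) (by omega)
  obtain ⟨B2, hB20, hB21⟩ := St.hom_basis 2 (s+3) (by omega) (by omega) (by omega)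
  obtain ⟨B1, hB10, hB11⟩ := St.hom_basis 1 (s+4) (by omega) (by omega) (by omega)
  set X : D := St.P j with hXdef
  -- transported bases
  let E4 := aux_preL (D := D) (St.P 4) (eqToHom (congrArg St.P h4).symm)
    (eqToHom (congrArg St.P h4)) (by simp) (by simp)
  let E3 := aux_preL (D := D) (St.P 3) (eqToHom (congrArg St.P h3).symm)
    (eqToHom (congrArg St.P h3)) (by simp) (by simp)
  let E2 := aux_preL (D := D) (St.P 2) (eqToHom (congrArg St.P h2).symm)
    (eqToHom (congrArg St.P h2)) (by simp) (by simp)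
  let E1 := aux_preL (D := D) (St.P 1) (eqToHom (congrArg St.P h1).symm)
    (eqToHom (congrArg St.P h1)) (by simp) (by simp)
  let C4 : Module.Basis (Fin 2) ℂ (X ⟶ St.P 4) := B4.map E4
  let C3 : Module.Basis (Fin 2) ℂ (X ⟶ St.P 3) := B3.map E3
  let C2 : Module.Basis (Fin 2) ℂ (X ⟶ St.P 2) := B2.map E2
  let C1 : Module.Basis (Fin 2) ℂ (X ⟶ St.P 1) := B1.map E1
  have hC40 : C4 0 = eqToHom (congrArg St.P h4).symm ≫ pathComp St.P St.a 4 (s+1) := by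
    simp only [C4, E4, Module.Basis.map_apply, aux_preL, LinearEquiv.ofLinear_apply,
      Linear.leftComp_apply, hB40]
  have hC41 : C4 1 = eqToHom (congrArg St.P h4).symm ≫ pathComp St.P St.b 4 (s+1) := by
    simp only [C4, E4, Module.Basis.map_apply, aux_preL, LinearEquiv.ofLinear_apply,
      Linear.leftComp_apply, hB41]
  have hC30 : C3 0 = eqToHom (congrArg St.P h3).symm ≫ pathComp St.P St.a 3 (s+2) := by
    simp only [C3, E3, Module.Basis.map_apply, aux_preL, LinearEquiv.ofLinear_apply,
      Linear.leftComp_apply, hB30]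
  have hC31 : C3 1 = eqToHom (congrArg St.P h3).symm ≫ pathComp St.P St.b 3 (s+2) := by
    simp only [C3, E3, Module.Basis.map_apply, aux_preL, LinearEquiv.ofLinear_apply,
      Linear.leftComp_apply, hB31]
  have hC20 : C2 0 = eqToHom (congrArg St.P h2).symm ≫ pathComp St.P St.a 2 (s+3) := by
    simp only [C2, E2, Module.Basis.map_apply, aux_preL, LinearEquiv.ofLinear_apply,
      Linear.leftComp_apply, hB20]
  have hC21 : C2 1 = eqToHom (congrArg St.P h2).symm ≫ pathComp St.P St.b 2 (s+3) := by
    simp only [C2, E2, Module.Basis.map_apply, aux_preL, LinearEquiv.ofLinear_apply,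
      Linear.leftComp_apply, hB21]
  have hC10 : C1 0 = eqToHom (congrArg St.P h1).symm ≫ pathComp St.P St.a 1 (s+4) := by
    simp only [C1, E1, Module.Basis.map_apply, aux_preL, LinearEquiv.ofLinear_apply,
      Linear.leftComp_apply, hB10]
  have hC11 : C1 1 = eqToHom (congrArg St.P h1).symm ≫ pathComp St.P St.b 1 (s+4) := by
    simp only [C1, E1, Module.Basis.map_apply, aux_preL, LinearEquiv.ofLinear_apply,
      Linear.leftComp_apply, hB11]
  -- path composition facts
  have F1 : C4 0 ≫ St.b 3 = 0 := by
    have hm : pathComp St.P St.a 4 (s+1) ≫ St.b 3 = 0 :=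
      aux_pathComp_mixed St.P St.a St.b St.rel_ab 3 s
    rw [hC40, Category.assoc, hm, comp_zero]
  have F4 : C3 1 ≫ St.a 2 = 0 := by
    have hm : pathComp St.P St.b 3 (s+2) ≫ St.a 2 = 0 :=
      aux_pathComp_mixed St.P St.b St.a St.rel_ba 2 (s+1)
    rw [hC31, Category.assoc, hm, comp_zero]
  have F5 : C2 0 ≫ St.b 1 = 0 := by
    have hm : pathComp St.P St.a 2 (s+3) ≫ St.b 1 = 0 :=
      aux_pathComp_mixed St.P St.a St.b St.rel_ab 1 (s+2)
    rw [hC20, Category.assoc, hm, comp_zero]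
  have F2 : C4 1 ≫ St.b 3 = C3 1 := by
    have hd : pathComp St.P St.b 3 (s+2)
        = eqToHom (congrArg St.P (by omega : 3 + (s+2) = 4 + (s+1)))
          ≫ pathComp St.P St.b 4 (s+1) ≫ St.b 3 :=
      aux_pathComp_down St.P St.b 3 (s+1)
    rw [hC41, hC31, hd, Category.assoc, ← Category.assoc (eqToHom _) (eqToHom _),
      eqToHom_trans]
  have F3 : C3 0 ≫ St.a 2 = C2 0 := by
    have hd : pathComp St.P St.a 2 (s+3)
        = eqToHom (congrArg St.P (by omega : 2 + (s+3) = 3 + (s+2)))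
          ≫ pathComp St.P St.a 3 (s+2) ≫ St.a 2 :=
      aux_pathComp_down St.P St.a 2 (s+2)
    rw [hC30, hC20, hd, Category.assoc, ← Category.assoc (eqToHom _) (eqToHom _),
      eqToHom_trans]
  have F6 : C2 1 ≫ St.b 1 = C1 1 := by
    have hd : pathComp St.P St.b 1 (s+4)
        = eqToHom (congrArg St.P (by omega : 1 + (s+4) = 2 + (s+3)))
          ≫ pathComp St.P St.b 2 (s+3) ≫ St.b 1 :=
      aux_pathComp_down St.P St.b 1 (s+3)
    rw [hC21, hC11, hd, Category.assoc, ← Category.assoc (eqToHom _) (eqToHom _),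
      eqToHom_trans]
  -- vanishing of shifted homs into the projectives
  have hv : ∀ (i : ℕ), 1 ≤ i → i ≤ 4 → ∀ (p : ℤ), p ≠ 0 →
      ∀ f : X ⟶ (St.P i)⟦p⟧, f = 0 := by
    intro i hi1 hi4 p hp f
    obtain ⟨e⟩ := St.hom_dims j i (by omega) hjμ (by omega) (by omega) p
    have hc : (fun p : ℤ => if p = 0 then (if j = i then 1 else if i < j then 2 else 0)
        else 0) p = 0 := by simp only [if_neg hp]
    haveI : Subsingleton (Fin ((fun p : ℤ => if p = 0 then
        (if j = i then 1 else if i < j then 2 else 0) else 0) p) → ℂ) := by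
      rw [hc]; infer_instance
    exact e.injective (Subsingleton.elim _ _)
  -- zero composites from the three distinguished triangles
  have z12_1 : St.b 3 ≫ TDp.ι₁ = 0 := comp_distTriang_mor_zero₁₂ _ TDp.tri₁
  have z12_2 : TDp.v₁ ≫ TDp.ι₂ = 0 := comp_distTriang_mor_zero₁₂ _ TDp.tri₂
  have z12_3 : TDp.v₂ ≫ TDp.ι₃ = 0 := comp_distTriang_mor_zero₁₂ _ TDp.tri₃
  have z31_1 : TDp.δ₁ ≫ (St.b 3)⟦(1:ℤ)⟧' = 0 := comp_distTriang_mor_zero₃₁ _ TDp.tri₁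
  have z31_2 : TDp.δ₂ ≫ (TDp.v₁)⟦(1:ℤ)⟧' = 0 := comp_distTriang_mor_zero₃₁ _ TDp.tri₂
  have z31_3 : TDp.δ₃ ≫ (TDp.v₂)⟦(1:ℤ)⟧' = 0 := comp_distTriang_mor_zero₃₁ _ TDp.tri₃
  -- vanishing for K₁
  have vanK1 : ∀ r : ℤ, r ≠ 0 → r ≠ -1 → ∀ f : X ⟶ TDp.K₁⟦r⟧, f = 0 := by
    intro r hr0 hr1 f
    have hδ : f ≫ TDp.δ₁⟦r⟧' = 0 :=
      aux_van_shift r (1+r) rfl (hv 4 (by norm_num) (by norm_num) (1+r) (by omega)) _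
    obtain ⟨g, hg⟩ := aux_shift_ex₂ (rot_of_distTriang _ TDp.tri₁) r (X := X) f hδ
    rw [hg, show g = 0 from hv 3 (by norm_num) (by norm_num) r hr0 g]; exact zero_comp
  -- injectivity of composition with v₁ on Hom(X, K₁)
  have K1inj : ∀ t : X ⟶ TDp.K₁, t ≫ TDp.v₁ = 0 → t = 0 := by
    intro t ht
    have hδ : t ≫ TDp.δ₁ = 0 := by
      rw [hv 4 (by norm_num) (by norm_num) 1 (by norm_num) (t ≫ TDp.δ₁)]
    obtain ⟨w, hw'⟩ : ∃ w : X ⟶ St.P 3, t = w ≫ TDp.ι₁ :=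
      Triangle.coyoneda_exact₃ _ TDp.tri₁ t hδ
    have hw : t = w ≫ TDp.ι₁ := hw'
    have hwa : w ≫ St.a 2 = 0 := by
      have hh : w ≫ TDp.ι₁ ≫ TDp.v₁ = 0 := by rw [← Category.assoc, ← hw, ht]
      rwa [TDp.fac₁] at hh
    have hwex := aux_expand2 C3 w
    have hcoef : C3.repr w 0 = 0 := by
      have h0 : (C3.repr w 0) • (C3 0 ≫ St.a 2) + (C3.repr w 1) • (C3 1 ≫ St.a 2) = 0 := by
        rw [← Linear.smul_comp, ← Linear.smul_comp, ← Preadditive.add_comp, ← hwex, hwa]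
      rw [F3, F4, smul_zero, add_zero] at h0
      exact (smul_eq_zero.mp h0).resolve_right (C2.ne_zero 0)
    have hz : C3 1 ≫ TDp.ι₁ = 0 := by rw [← F2, Category.assoc, z12_1, comp_zero]
    calc t = w ≫ TDp.ι₁ := hw
      _ = (C3.repr w 0 • C3 0 + C3.repr w 1 • C3 1) ≫ TDp.ι₁ := by rw [← hwex]
      _ = C3.repr w 0 • (C3 0 ≫ TDp.ι₁) + C3.repr w 1 • (C3 1 ≫ TDp.ι₁) := by
          rw [Preadditive.add_comp, Linear.smul_comp, Linear.smul_comp]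
      _ = 0 := by rw [hcoef, hz]; simp
  -- factorization through ι₂ for morphisms to K₂
  have K2fact : ∀ t : X ⟶ TDp.K₂, ∃ m : X ⟶ St.P 2, t = m ≫ TDp.ι₂ := by
    intro t
    have hδ : t ≫ TDp.δ₂ = 0 := vanK1 1 (by norm_num) (by norm_num) (t ≫ TDp.δ₂)
    exact Triangle.coyoneda_exact₃ _ TDp.tri₂ t hδ
  -- injectivity of composition with v₂ on Hom(X, K₂)
  have K2inj : ∀ t : X ⟶ TDp.K₂, t ≫ TDp.v₂ = 0 → t = 0 := by
    intro t ht
    obtain ⟨m, hm⟩ := K2fact t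
    have hmb : m ≫ St.b 1 = 0 := by
      have hh : m ≫ TDp.ι₂ ≫ TDp.v₂ = 0 := by rw [← Category.assoc, ← hm, ht]
      rwa [TDp.fac₂] at hh
    have hmex := aux_expand2 C2 m
    have hcoef : C2.repr m 1 = 0 := by
      have h0 : (C2.repr m 0) • (C2 0 ≫ St.b 1) + (C2.repr m 1) • (C2 1 ≫ St.b 1) = 0 := by
        rw [← Linear.smul_comp, ← Linear.smul_comp, ← Preadditive.add_comp, ← hmex, hmb]
      rw [F5, F6, smul_zero, zero_add] at h0
      exact (smul_eq_zero.mp h0).resolve_right (C1.ne_zero 1)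
    have hfac : St.a 2 ≫ TDp.ι₂ = 0 := by
      have hh : St.a 2 ≫ TDp.ι₂ = (TDp.ι₁ ≫ TDp.v₁) ≫ TDp.ι₂ := by rw [TDp.fac₁]
      rw [hh, Category.assoc, z12_2, comp_zero]
    have hz : C2 0 ≫ TDp.ι₂ = 0 := by
      rw [← F3, Category.assoc, hfac, comp_zero]
    calc t = m ≫ TDp.ι₂ := hm
      _ = (C2.repr m 0 • C2 0 + C2.repr m 1 • C2 1) ≫ TDp.ι₂ := by rw [← hmex]
      _ = C2.repr m 0 • (C2 0 ≫ TDp.ι₂) + C2.repr m 1 • (C2 1 ≫ TDp.ι₂) := by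
          rw [Preadditive.add_comp, Linear.smul_comp, Linear.smul_comp]
      _ = 0 := by rw [hcoef, hz]; simp
  -- vanishing for K₂, away from 0 and -2
  have vanK2 : ∀ q : ℤ, q ≠ 0 → q ≠ -2 → ∀ f : X ⟶ TDp.K₂⟦q⟧, f = 0 := by
    intro q hq0 hq2 f
    by_cases hq1 : q = -1
    · subst hq1
      -- special argument via injectivity of v₁ on Hom(X, K₁)
      set A := shiftFunctorAdd' D 1 (-1 : ℤ) 0 (by ring) with hA
      set zz := shiftFunctorZero D ℤ with hzz
      have n1 : zz.hom.app TDp.K₁ ≫ TDp.v₁ = TDp.v₁⟦(0:ℤ)⟧' ≫ zz.hom.app (St.P 2) :=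
        (zz.hom.naturality TDp.v₁).symm
      have n2 : A.inv.app TDp.K₁ ≫ TDp.v₁⟦(0:ℤ)⟧'
          = ((TDp.v₁⟦(1:ℤ)⟧')⟦(-1:ℤ)⟧') ≫ A.inv.app (St.P 2) :=
        (A.inv.naturality TDp.v₁).symm
      have hinner : TDp.δ₂⟦(-1:ℤ)⟧' ≫ A.inv.app TDp.K₁ ≫ zz.hom.app TDp.K₁ ≫ TDp.v₁ = 0 := by
        calc TDp.δ₂⟦(-1:ℤ)⟧' ≫ A.inv.app TDp.K₁ ≫ zz.hom.app TDp.K₁ ≫ TDp.v₁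
            = TDp.δ₂⟦(-1:ℤ)⟧' ≫ A.inv.app TDp.K₁ ≫ TDp.v₁⟦(0:ℤ)⟧' ≫ zz.hom.app (St.P 2) := by
              rw [n1]
          _ = TDp.δ₂⟦(-1:ℤ)⟧' ≫ (((TDp.v₁⟦(1:ℤ)⟧')⟦(-1:ℤ)⟧') ≫ A.inv.app (St.P 2))
              ≫ zz.hom.app (St.P 2) := by
              rw [← Category.assoc (A.inv.app TDp.K₁), n2]
          _ = ((TDp.δ₂ ≫ TDp.v₁⟦(1:ℤ)⟧')⟦(-1:ℤ)⟧') ≫ A.inv.app (St.P 2)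
              ≫ zz.hom.app (St.P 2) := by
              rw [Functor.map_comp]; simp only [Category.assoc]
          _ = 0 := by rw [z31_2, Functor.map_zero, zero_comp]
      have ht0 : f ≫ TDp.δ₂⟦(-1:ℤ)⟧' ≫ A.inv.app TDp.K₁ ≫ zz.hom.app TDp.K₁ = 0 := by
        apply K1inj
        simp only [Category.assoc]
        rw [hinner, comp_zero]
      have hu0 : f ≫ TDp.δ₂⟦(-1:ℤ)⟧' = 0 := by
        have hiso : f ≫ TDp.δ₂⟦(-1:ℤ)⟧'
            = (f ≫ TDp.δ₂⟦(-1:ℤ)⟧' ≫ A.inv.app TDp.K₁ ≫ zz.hom.app TDp.K₁)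
              ≫ zz.inv.app TDp.K₁ ≫ A.hom.app TDp.K₁ := by simp
        rw [hiso, ht0, zero_comp]
      obtain ⟨g, hg⟩ := aux_shift_ex₂ (rot_of_distTriang _ TDp.tri₂) (-1 : ℤ) (X := X) f hu0
      rw [hg, show g = 0 from hv 2 (by norm_num) (by norm_num) (-1 : ℤ) (by norm_num) g]; exact zero_comp
    · have hδ : f ≫ TDp.δ₂⟦q⟧' = 0 :=
        aux_van_shift q (1+q) rfl (vanK1 (1+q) (by omega) (by omega)) _
      obtain ⟨g, hg⟩ := aux_shift_ex₂ (rot_of_distTriang _ TDp.tri₂) q (X := X) f hδ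
      rw [hg, show g = 0 from hv 2 (by norm_num) (by norm_num) q hq0 g]; exact zero_comp
  -- now the main computation
  intro p
  by_cases hp0 : p = 0
  · subst hp0
    have hiff : ((fun p : ℤ => if p = 0 ∨ p = -3 then 1 else 0) (0 : ℤ)) = 1 := by norm_num
    rw [hiff]
    set zz := shiftFunctorZero D ℤ with hzz
    set φ : (X ⟶ St.P 1) →ₗ[ℂ] (X ⟶ Sp⟦(0:ℤ)⟧) :=
      Linear.rightComp ℂ X (TDp.ι₃ ≫ zz.inv.app Sp) with hφdef
    have hφapp : ∀ g : X ⟶ St.P 1, φ g = g ≫ TDp.ι₃ ≫ zz.inv.app Sp := fun g => by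
      rw [hφdef, Linear.rightComp_apply]
    have hb1ι : St.b 1 ≫ TDp.ι₃ = 0 := by
      have hh : St.b 1 ≫ TDp.ι₃ = (TDp.ι₂ ≫ TDp.v₂) ≫ TDp.ι₃ := by rw [TDp.fac₂]
      rw [hh, Category.assoc, z12_3, comp_zero]
    have hφ11 : φ (C1 1) = 0 := by
      have hz : C1 1 ≫ TDp.ι₃ = 0 := by rw [← F6, Category.assoc, hb1ι, comp_zero]
      rw [hφapp, ← Category.assoc, hz, zero_comp]
    have hφ10 : φ (C1 0) ≠ 0 := by
      intro hcon
      have h10 : C1 0 ≫ TDp.ι₃ = 0 := by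
        have hh : C1 0 ≫ TDp.ι₃
            = (C1 0 ≫ TDp.ι₃ ≫ zz.inv.app Sp) ≫ zz.hom.app Sp := by simp
        rw [hh, ← hφapp, hcon, zero_comp]
      obtain ⟨h, hh'⟩ : ∃ h : X ⟶ TDp.K₂, C1 0 = h ≫ TDp.v₂ :=
        Triangle.coyoneda_exact₂ _ TDp.tri₃ (C1 0) h10
      have hhv : C1 0 = h ≫ TDp.v₂ := hh'
      obtain ⟨m, hm⟩ := K2fact h
      have hc10 : C1 0 = m ≫ St.b 1 := by rw [hhv, hm, Category.assoc, TDp.fac₂]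
      have hmex := aux_expand2 C2 m
      have hrel : C1 0 = (C2.repr m 1) • C1 1 := by
        calc C1 0 = m ≫ St.b 1 := hc10
          _ = (C2.repr m 0 • C2 0 + C2.repr m 1 • C2 1) ≫ St.b 1 := by rw [← hmex]
          _ = C2.repr m 0 • (C2 0 ≫ St.b 1) + C2.repr m 1 • (C2 1 ≫ St.b 1) := by
              rw [Preadditive.add_comp, Linear.smul_comp, Linear.smul_comp]
          _ = (C2.repr m 1) • C1 1 := by rw [F5, F6]; simp
      have hone : (1 : ℂ) = 0 := by
        have hco := congrArg (fun t => C1.repr t 0) hrel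
        simpa [Module.Basis.repr_self, Finsupp.single_apply] using hco
      exact one_ne_zero hone
    have hφs : Function.Surjective φ := by
      intro f
      have hδ : f ≫ TDp.δ₃⟦(0:ℤ)⟧' = 0 :=
        aux_van_shift 0 1 rfl (vanK2 1 (by norm_num) (by norm_num)) _
      obtain ⟨g₀, hg₀'⟩ : ∃ g₀ : X ⟶ (St.P 1)⟦(0:ℤ)⟧, f = g₀ ≫ TDp.ι₃⟦(0:ℤ)⟧' := aux_shift_ex₂ (rot_of_distTriang _ TDp.tri₃) 0 (X := X) f hδ
      have hg₀ : f = g₀ ≫ TDp.ι₃⟦(0:ℤ)⟧' := hg₀'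
      refine ⟨g₀ ≫ zz.hom.app (St.P 1), ?_⟩
      have n1 : zz.hom.app (St.P 1) ≫ TDp.ι₃ = TDp.ι₃⟦(0:ℤ)⟧' ≫ zz.hom.app Sp :=
        (zz.hom.naturality TDp.ι₃).symm
      calc φ (g₀ ≫ zz.hom.app (St.P 1))
          = g₀ ≫ (zz.hom.app (St.P 1) ≫ TDp.ι₃) ≫ zz.inv.app Sp := by
            rw [hφapp]; simp only [Category.assoc]
        _ = g₀ ≫ (TDp.ι₃⟦(0:ℤ)⟧' ≫ zz.hom.app Sp) ≫ zz.inv.app Sp := by rw [n1]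
        _ = g₀ ≫ TDp.ι₃⟦(0:ℤ)⟧' := by
            simp only [Category.assoc, Iso.hom_inv_id_app, Category.comp_id]
        _ = f := hg₀.symm
    set χ : (X ⟶ St.P 1) →ₗ[ℂ] ℂ := C1.coord 0 with hχdef
    have hχs : Function.Surjective χ := by
      intro c
      refine ⟨c • C1 0, ?_⟩
      simp [hχdef, Module.Basis.coord_apply, Module.Basis.repr_self]
    have hk : ∀ g, φ g = 0 ↔ χ g = 0 := by
      intro g
      have hexp : φ g = (C1.repr g 0) • φ (C1 0) := by
        conv_lhs => rw [aux_expand2 C1 g]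
        rw [map_add, map_smul, map_smul, hφ11, smul_zero, add_zero]
      have hχg : χ g = C1.repr g 0 := by simp [hχdef, Module.Basis.coord_apply]
      rw [hexp, hχg]
      constructor
      · intro h
        rcases smul_eq_zero.mp h with h | h
        · exact h
        · exact absurd h hφ10
      · intro h
        rw [h, zero_smul]
    exact aux_equivOne φ χ hφs hχs hk
  · by_cases hp3 : p = -3
    · subst hp3
      have hiff : ((fun p : ℤ => if p = 0 ∨ p = -3 then 1 else 0) (-3 : ℤ)) = 1 := by norm_num
      rw [hiff]
      set A3 := shiftFunctorAdd' D 1 (-3 : ℤ) (-2) (by ring) with hA3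
      set A2 := shiftFunctorAdd' D 1 (-2 : ℤ) (-1) (by ring) with hA2
      set A1 := shiftFunctorAdd' D 1 (-1 : ℤ) 0 (by ring) with hA1
      set zz := shiftFunctorZero D ℤ with hzz
      set Θ : Sp⟦(-3:ℤ)⟧ ⟶ St.P 4 :=
        TDp.δ₃⟦(-3:ℤ)⟧' ≫ A3.inv.app TDp.K₂ ≫ TDp.δ₂⟦(-2:ℤ)⟧' ≫ A2.inv.app TDp.K₁
          ≫ TDp.δ₁⟦(-1:ℤ)⟧' ≫ A1.inv.app (St.P 4) ≫ zz.hom.app (St.P 4) with hΘdef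
      set Φ : (X ⟶ Sp⟦(-3:ℤ)⟧) →ₗ[ℂ] (X ⟶ St.P 4) := Linear.rightComp ℂ X Θ with hΦdef
      set ψ : (X ⟶ St.P 4) →ₗ[ℂ] (X ⟶ St.P 3) := Linear.rightComp ℂ X (St.b 3) with hψdef
      have hΦapp : ∀ w : X ⟶ Sp⟦(-3:ℤ)⟧, Φ w = w ≫ Θ := fun w => by
        rw [hΦdef, Linear.rightComp_apply]
      have hψapp : ∀ m : X ⟶ St.P 4, ψ m = m ≫ St.b 3 := fun m => by
        rw [hψdef, Linear.rightComp_apply]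
      -- Θ ≫ b₃ = 0
      have n1 : zz.hom.app (St.P 4) ≫ St.b 3 = (St.b 3)⟦(0:ℤ)⟧' ≫ zz.hom.app (St.P 3) :=
        (zz.hom.naturality (St.b 3)).symm
      have n2 : A1.inv.app (St.P 4) ≫ (St.b 3)⟦(0:ℤ)⟧'
          = (((St.b 3)⟦(1:ℤ)⟧')⟦(-1:ℤ)⟧') ≫ A1.inv.app (St.P 3) :=
        (A1.inv.naturality (St.b 3)).symm
      have hin : TDp.δ₁⟦(-1:ℤ)⟧' ≫ A1.inv.app (St.P 4) ≫ zz.hom.app (St.P 4) ≫ St.b 3 = 0 := by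
        calc TDp.δ₁⟦(-1:ℤ)⟧' ≫ A1.inv.app (St.P 4) ≫ zz.hom.app (St.P 4) ≫ St.b 3
            = TDp.δ₁⟦(-1:ℤ)⟧' ≫ A1.inv.app (St.P 4) ≫ (St.b 3)⟦(0:ℤ)⟧'
              ≫ zz.hom.app (St.P 3) := by rw [n1]
          _ = TDp.δ₁⟦(-1:ℤ)⟧' ≫ ((((St.b 3)⟦(1:ℤ)⟧')⟦(-1:ℤ)⟧') ≫ A1.inv.app (St.P 3))
              ≫ zz.hom.app (St.P 3) := by rw [← Category.assoc (A1.inv.app (St.P 4)), n2]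
          _ = ((TDp.δ₁ ≫ (St.b 3)⟦(1:ℤ)⟧')⟦(-1:ℤ)⟧') ≫ A1.inv.app (St.P 3)
              ≫ zz.hom.app (St.P 3) := by
              rw [Functor.map_comp]; simp only [Category.assoc]
          _ = 0 := by rw [z31_1, Functor.map_zero, zero_comp]
      have hΘb : Θ ≫ St.b 3 = 0 := by
        rw [hΘdef]
        simp only [Category.assoc]
        rw [hin]
        simp
      have hψΦ : ∀ w, ψ (Φ w) = 0 := by
        intro w
        rw [hψapp, hΦapp, Category.assoc, hΘb, comp_zero]
      -- injectivity of Φ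
      have hΦinj : Function.Injective Φ := by
        rw [injective_iff_map_eq_zero Φ]
        intro w hw
        have hw' : w ≫ Θ = 0 := by rw [← hΦapp w]; exact hw
        have hNZ : w ≫ TDp.δ₃⟦(-3:ℤ)⟧' ≫ A3.inv.app TDp.K₂ ≫ TDp.δ₂⟦(-2:ℤ)⟧'
            ≫ A2.inv.app TDp.K₁ ≫ TDp.δ₁⟦(-1:ℤ)⟧' = 0 := by
          have hh : w ≫ TDp.δ₃⟦(-3:ℤ)⟧' ≫ A3.inv.app TDp.K₂ ≫ TDp.δ₂⟦(-2:ℤ)⟧'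
              ≫ A2.inv.app TDp.K₁ ≫ TDp.δ₁⟦(-1:ℤ)⟧'
              = (w ≫ Θ) ≫ zz.inv.app (St.P 4) ≫ A1.hom.app (St.P 4) := by
            rw [hΘdef]; simp
          rw [hh, hw', zero_comp]
        have hy1 : w ≫ TDp.δ₃⟦(-3:ℤ)⟧' ≫ A3.inv.app TDp.K₂ ≫ TDp.δ₂⟦(-2:ℤ)⟧'
            ≫ A2.inv.app TDp.K₁ = 0 := by
          obtain ⟨g, hg⟩ : ∃ g : X ⟶ (St.P 3)⟦(-1:ℤ)⟧, w ≫ TDp.δ₃⟦(-3:ℤ)⟧' ≫ A3.inv.app TDp.K₂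
              ≫ TDp.δ₂⟦(-2:ℤ)⟧' ≫ A2.inv.app TDp.K₁ = g ≫ TDp.ι₁⟦(-1:ℤ)⟧' :=
            aux_shift_ex₂ (rot_of_distTriang _ TDp.tri₁) (-1 : ℤ) (X := X)
            (w ≫ TDp.δ₃⟦(-3:ℤ)⟧' ≫ A3.inv.app TDp.K₂ ≫ TDp.δ₂⟦(-2:ℤ)⟧' ≫ A2.inv.app TDp.K₁)
            (by
              have h : (w ≫ TDp.δ₃⟦(-3:ℤ)⟧' ≫ A3.inv.app TDp.K₂ ≫ TDp.δ₂⟦(-2:ℤ)⟧'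
                  ≫ A2.inv.app TDp.K₁) ≫ TDp.δ₁⟦(-1:ℤ)⟧' = 0 := by
                simpa only [Category.assoc] using hNZ
              exact h)
          rw [hg, show g = 0 from hv 3 (by norm_num) (by norm_num) (-1 : ℤ) (by norm_num) g]; exact zero_comp
        have hy2 : w ≫ TDp.δ₃⟦(-3:ℤ)⟧' ≫ A3.inv.app TDp.K₂ = 0 := by
          have h' : (w ≫ TDp.δ₃⟦(-3:ℤ)⟧' ≫ A3.inv.app TDp.K₂) ≫ TDp.δ₂⟦(-2:ℤ)⟧' = 0 := by
            have hh : (w ≫ TDp.δ₃⟦(-3:ℤ)⟧' ≫ A3.inv.app TDp.K₂) ≫ TDp.δ₂⟦(-2:ℤ)⟧'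
                = (w ≫ TDp.δ₃⟦(-3:ℤ)⟧' ≫ A3.inv.app TDp.K₂ ≫ TDp.δ₂⟦(-2:ℤ)⟧'
                  ≫ A2.inv.app TDp.K₁) ≫ A2.hom.app TDp.K₁ := by simp
            rw [hh, hy1, zero_comp]
          obtain ⟨g, hg⟩ : ∃ g : X ⟶ (St.P 2)⟦(-2:ℤ)⟧,
              w ≫ TDp.δ₃⟦(-3:ℤ)⟧' ≫ A3.inv.app TDp.K₂ = g ≫ TDp.ι₂⟦(-2:ℤ)⟧' :=
            aux_shift_ex₂ (rot_of_distTriang _ TDp.tri₂) (-2 : ℤ) (X := X)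
            (w ≫ TDp.δ₃⟦(-3:ℤ)⟧' ≫ A3.inv.app TDp.K₂) h'
          rw [hg, show g = 0 from hv 2 (by norm_num) (by norm_num) (-2 : ℤ) (by norm_num) g]; exact zero_comp
        have h'' : w ≫ TDp.δ₃⟦(-3:ℤ)⟧' = 0 := by
          have hh : w ≫ TDp.δ₃⟦(-3:ℤ)⟧'
              = (w ≫ TDp.δ₃⟦(-3:ℤ)⟧' ≫ A3.inv.app TDp.K₂) ≫ A3.hom.app TDp.K₂ := by simp
          rw [hh, hy2, zero_comp]
        obtain ⟨g, hg⟩ := aux_shift_ex₂ (rot_of_distTriang _ TDp.tri₃) (-3 : ℤ) (X := X) w h''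
        rw [hg, show g = 0 from hv 1 (by norm_num) (by norm_num) (-3 : ℤ) (by norm_num) g]; exact zero_comp
      -- surjectivity of Φ onto the kernel of ψ
      have hlift : ∀ m : X ⟶ St.P 4, ψ m = 0 → ∃ w, Φ w = m := by
        intro m hm
        have hm' : m ≫ St.b 3 = 0 := by rw [← hψapp m]; exact hm
        -- step 1: lift along δ₁
        have hstep1 : (m ≫ zz.inv.app (St.P 4) ≫ A1.hom.app (St.P 4))
            ≫ (((St.b 3)⟦(1:ℤ)⟧')⟦(-1:ℤ)⟧') = 0 := by
          have nz : zz.inv.app (St.P 4) ≫ (St.b 3)⟦(0:ℤ)⟧'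
              = St.b 3 ≫ zz.inv.app (St.P 3) := (zz.inv.naturality (St.b 3)).symm
          have hh : (m ≫ zz.inv.app (St.P 4) ≫ A1.hom.app (St.P 4))
              ≫ (((St.b 3)⟦(1:ℤ)⟧')⟦(-1:ℤ)⟧')
              = ((m ≫ zz.inv.app (St.P 4) ≫ A1.hom.app (St.P 4))
                ≫ ((((St.b 3)⟦(1:ℤ)⟧')⟦(-1:ℤ)⟧') ≫ A1.inv.app (St.P 3)))
                ≫ A1.hom.app (St.P 3) := by simp
          rw [hh, ← n2]
          have hh2 : (m ≫ zz.inv.app (St.P 4) ≫ A1.hom.app (St.P 4))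
              ≫ (A1.inv.app (St.P 4) ≫ (St.b 3)⟦(0:ℤ)⟧')
              = m ≫ (zz.inv.app (St.P 4) ≫ (St.b 3)⟦(0:ℤ)⟧') := by simp
          rw [hh2, nz, ← Category.assoc, hm', zero_comp, zero_comp]
        obtain ⟨y1, hy1'⟩ : ∃ y1 : X ⟶ TDp.K₁⟦(-1:ℤ)⟧,
            m ≫ zz.inv.app (St.P 4) ≫ A1.hom.app (St.P 4) = y1 ≫ TDp.δ₁⟦(-1:ℤ)⟧' := aux_shift_ex₂
          (rot_of_distTriang _ (rot_of_distTriang _ TDp.tri₁)) (-1 : ℤ) (X := X)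
          (m ≫ zz.inv.app (St.P 4) ≫ A1.hom.app (St.P 4)) (by
            have : ((Triangle.mk (St.b 3) TDp.ι₁ TDp.δ₁).rotate.rotate.mor₂)⟦(-1:ℤ)⟧'
                = -((((St.b 3)⟦(1:ℤ)⟧')⟦(-1:ℤ)⟧')) := by
              exact (shiftFunctor D (-1 : ℤ)).map_neg
            rw [this]; exact (Preadditive.comp_neg _ _).trans ((congrArg Neg.neg hstep1).trans neg_zero))
        have hy1 : m ≫ zz.inv.app (St.P 4) ≫ A1.hom.app (St.P 4)
            = y1 ≫ TDp.δ₁⟦(-1:ℤ)⟧' := hy1'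
        -- step 2: lift along δ₂
        have hstep2 : (y1 ≫ A2.hom.app TDp.K₁) ≫ ((TDp.v₁⟦(1:ℤ)⟧')⟦(-2:ℤ)⟧') = 0 := by
          have nA : A2.inv.app TDp.K₁ ≫ TDp.v₁⟦(-1:ℤ)⟧'
              = ((TDp.v₁⟦(1:ℤ)⟧')⟦(-2:ℤ)⟧') ≫ A2.inv.app (St.P 2) :=
            (A2.inv.naturality TDp.v₁).symm
          have hh : (y1 ≫ A2.hom.app TDp.K₁) ≫ ((TDp.v₁⟦(1:ℤ)⟧')⟦(-2:ℤ)⟧')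
              = ((y1 ≫ A2.hom.app TDp.K₁)
                ≫ (((TDp.v₁⟦(1:ℤ)⟧')⟦(-2:ℤ)⟧') ≫ A2.inv.app (St.P 2)))
                ≫ A2.hom.app (St.P 2) := by simp
          rw [hh, ← nA]
          have hh2 : (y1 ≫ A2.hom.app TDp.K₁) ≫ (A2.inv.app TDp.K₁ ≫ TDp.v₁⟦(-1:ℤ)⟧')
              = y1 ≫ TDp.v₁⟦(-1:ℤ)⟧' := by simp
          rw [hh2, hv 2 (by norm_num) (by norm_num) (-1 : ℤ) (by norm_num)
            (y1 ≫ TDp.v₁⟦(-1:ℤ)⟧'), zero_comp]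
        obtain ⟨y2, hy2'⟩ : ∃ y2 : X ⟶ TDp.K₂⟦(-2:ℤ)⟧,
            y1 ≫ A2.hom.app TDp.K₁ = y2 ≫ TDp.δ₂⟦(-2:ℤ)⟧' := aux_shift_ex₂
          (rot_of_distTriang _ (rot_of_distTriang _ TDp.tri₂)) (-2 : ℤ) (X := X)
          (y1 ≫ A2.hom.app TDp.K₁) (by
            have : ((Triangle.mk TDp.v₁ TDp.ι₂ TDp.δ₂).rotate.rotate.mor₂)⟦(-2:ℤ)⟧'
                = -(((TDp.v₁⟦(1:ℤ)⟧')⟦(-2:ℤ)⟧')) := by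
              exact (shiftFunctor D (-2 : ℤ)).map_neg
            rw [this]; exact (Preadditive.comp_neg _ _).trans ((congrArg Neg.neg hstep2).trans neg_zero))
        have hy2 : y1 ≫ A2.hom.app TDp.K₁ = y2 ≫ TDp.δ₂⟦(-2:ℤ)⟧' := hy2'
        -- step 3: lift along δ₃
        have hstep3 : (y2 ≫ A3.hom.app TDp.K₂) ≫ ((TDp.v₂⟦(1:ℤ)⟧')⟦(-3:ℤ)⟧') = 0 := by
          have nA : A3.inv.app TDp.K₂ ≫ TDp.v₂⟦(-2:ℤ)⟧'
              = ((TDp.v₂⟦(1:ℤ)⟧')⟦(-3:ℤ)⟧') ≫ A3.inv.app (St.P 1) :=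
            (A3.inv.naturality TDp.v₂).symm
          have hh : (y2 ≫ A3.hom.app TDp.K₂) ≫ ((TDp.v₂⟦(1:ℤ)⟧')⟦(-3:ℤ)⟧')
              = ((y2 ≫ A3.hom.app TDp.K₂)
                ≫ (((TDp.v₂⟦(1:ℤ)⟧')⟦(-3:ℤ)⟧') ≫ A3.inv.app (St.P 1)))
                ≫ A3.hom.app (St.P 1) := by simp
          rw [hh, ← nA]
          have hh2 : (y2 ≫ A3.hom.app TDp.K₂) ≫ (A3.inv.app TDp.K₂ ≫ TDp.v₂⟦(-2:ℤ)⟧')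
              = y2 ≫ TDp.v₂⟦(-2:ℤ)⟧' := by simp
          rw [hh2, hv 1 (by norm_num) (by norm_num) (-2 : ℤ) (by norm_num)
            (y2 ≫ TDp.v₂⟦(-2:ℤ)⟧'), zero_comp]
        obtain ⟨w, hw'⟩ : ∃ w : X ⟶ Sp⟦(-3:ℤ)⟧,
            y2 ≫ A3.hom.app TDp.K₂ = w ≫ TDp.δ₃⟦(-3:ℤ)⟧' := aux_shift_ex₂
          (rot_of_distTriang _ (rot_of_distTriang _ TDp.tri₃)) (-3 : ℤ) (X := X)
          (y2 ≫ A3.hom.app TDp.K₂) (by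
            have : ((Triangle.mk TDp.v₂ TDp.ι₃ TDp.δ₃).rotate.rotate.mor₂)⟦(-3:ℤ)⟧'
                = -(((TDp.v₂⟦(1:ℤ)⟧')⟦(-3:ℤ)⟧')) := by
              exact (shiftFunctor D (-3 : ℤ)).map_neg
            rw [this]; exact (Preadditive.comp_neg _ _).trans ((congrArg Neg.neg hstep3).trans neg_zero))
        have hwfac : y2 ≫ A3.hom.app TDp.K₂ = w ≫ TDp.δ₃⟦(-3:ℤ)⟧' := hw'
        refine ⟨w, ?_⟩
        have e3 : w ≫ TDp.δ₃⟦(-3:ℤ)⟧' ≫ A3.inv.app TDp.K₂ = y2 := by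
          rw [← Category.assoc, ← hwfac]; simp
        have e2 : y2 ≫ TDp.δ₂⟦(-2:ℤ)⟧' ≫ A2.inv.app TDp.K₁ = y1 := by
          rw [← Category.assoc, ← hy2]; simp
        have e1 : y1 ≫ TDp.δ₁⟦(-1:ℤ)⟧' ≫ A1.inv.app (St.P 4) ≫ zz.hom.app (St.P 4) = m := by
          rw [← Category.assoc, ← hy1]; simp
        calc Φ w = (w ≫ TDp.δ₃⟦(-3:ℤ)⟧' ≫ A3.inv.app TDp.K₂) ≫ TDp.δ₂⟦(-2:ℤ)⟧'
              ≫ A2.inv.app TDp.K₁ ≫ TDp.δ₁⟦(-1:ℤ)⟧' ≫ A1.inv.app (St.P 4)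
              ≫ zz.hom.app (St.P 4) := by
              rw [hΦapp, hΘdef]; simp only [Category.assoc]
          _ = (y2 ≫ TDp.δ₂⟦(-2:ℤ)⟧' ≫ A2.inv.app TDp.K₁) ≫ TDp.δ₁⟦(-1:ℤ)⟧'
              ≫ A1.inv.app (St.P 4) ≫ zz.hom.app (St.P 4) := by
              rw [e3]; simp only [Category.assoc]
          _ = y1 ≫ TDp.δ₁⟦(-1:ℤ)⟧' ≫ A1.inv.app (St.P 4) ≫ zz.hom.app (St.P 4) := by
              rw [e2]
          _ = m := e1
      have hψ0 : ψ (C4 0) = 0 := by rw [hψapp, F1]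
      have hψ1 : ψ (C4 1) ≠ 0 := by
        rw [hψapp, F2]
        exact C3.ne_zero 1
      exact aux_kerEquivOne Φ ψ C4 hΦinj hψΦ hlift hψ0 hψ1
    · by_cases hp1 : p = -1
      · subst hp1
        have hiff : ((fun p : ℤ => if p = 0 ∨ p = -3 then 1 else 0) (-1 : ℤ)) = 0 := by norm_num
        rw [hiff]
        apply aux_zeroEquiv
        intro f
        set A := shiftFunctorAdd' D 1 (-1 : ℤ) 0 (by ring) with hA
        set zz := shiftFunctorZero D ℤ with hzz
        have n1 : zz.hom.app TDp.K₂ ≫ TDp.v₂ = TDp.v₂⟦(0:ℤ)⟧' ≫ zz.hom.app (St.P 1) :=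
          (zz.hom.naturality TDp.v₂).symm
        have n2 : A.inv.app TDp.K₂ ≫ TDp.v₂⟦(0:ℤ)⟧'
            = ((TDp.v₂⟦(1:ℤ)⟧')⟦(-1:ℤ)⟧') ≫ A.inv.app (St.P 1) :=
          (A.inv.naturality TDp.v₂).symm
        have hinner : TDp.δ₃⟦(-1:ℤ)⟧' ≫ A.inv.app TDp.K₂ ≫ zz.hom.app TDp.K₂ ≫ TDp.v₂ = 0 := by
          calc TDp.δ₃⟦(-1:ℤ)⟧' ≫ A.inv.app TDp.K₂ ≫ zz.hom.app TDp.K₂ ≫ TDp.v₂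
              = TDp.δ₃⟦(-1:ℤ)⟧' ≫ A.inv.app TDp.K₂ ≫ TDp.v₂⟦(0:ℤ)⟧'
                ≫ zz.hom.app (St.P 1) := by rw [n1]
            _ = TDp.δ₃⟦(-1:ℤ)⟧' ≫ (((TDp.v₂⟦(1:ℤ)⟧')⟦(-1:ℤ)⟧') ≫ A.inv.app (St.P 1))
                ≫ zz.hom.app (St.P 1) := by rw [← Category.assoc (A.inv.app TDp.K₂), n2]
            _ = ((TDp.δ₃ ≫ TDp.v₂⟦(1:ℤ)⟧')⟦(-1:ℤ)⟧') ≫ A.inv.app (St.P 1)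
                ≫ zz.hom.app (St.P 1) := by
                rw [Functor.map_comp]; simp only [Category.assoc]
            _ = 0 := by rw [z31_3, Functor.map_zero, zero_comp]
        have ht0 : f ≫ TDp.δ₃⟦(-1:ℤ)⟧' ≫ A.inv.app TDp.K₂ ≫ zz.hom.app TDp.K₂ = 0 := by
          apply K2inj
          simp only [Category.assoc]
          rw [hinner, comp_zero]
        have hu0 : f ≫ TDp.δ₃⟦(-1:ℤ)⟧' = 0 := by
          have hiso : f ≫ TDp.δ₃⟦(-1:ℤ)⟧'
              = (f ≫ TDp.δ₃⟦(-1:ℤ)⟧' ≫ A.inv.app TDp.K₂ ≫ zz.hom.app TDp.K₂)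
                ≫ zz.inv.app TDp.K₂ ≫ A.hom.app TDp.K₂ := by simp
          rw [hiso, ht0, zero_comp]
        obtain ⟨g, hg⟩ := aux_shift_ex₂ (rot_of_distTriang _ TDp.tri₃) (-1 : ℤ) (X := X) f hu0
        rw [hg, show g = 0 from hv 1 (by norm_num) (by norm_num) (-1 : ℤ) (by norm_num) g]; exact zero_comp
      · -- generic vanishing
        have hiff : ((fun p : ℤ => if p = 0 ∨ p = -3 then 1 else 0) p) = 0 := by
          simp [hp0, hp3]
        rw [hiff]
        apply aux_zeroEquiv
        intro f
        have hδ : f ≫ TDp.δ₃⟦p⟧' = 0 :=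
          aux_van_shift p (1+p) rfl (vanK2 (1+p) (by omega) (by omega)) _
        obtain ⟨g, hg⟩ := aux_shift_ex₂ (rot_of_distTriang _ TDp.tri₃) p (X := X) f hδ
        rw [hg, show g = 0 from hv 1 (by norm_num) (by norm_num) p hp0 g]; exact zero_comp

end CHS
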